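/- arXiv:2501.09132 — 6 statements merged into one kernel-verified Lean document; each statement's English description precedes it below -/
import Mathlib

section
/- Let X be a small category and F a field. The essential image of the functor rep(X, Top) → rep(X, Vect_F) given by postcomposition with degree-0 singular homology H_0(−; F) coincides with the essential image of the functor rep(X, Set) → rep(X, Vect_F) given by postcomposition with the free vector space functor. In particular, the additive images of these two functors also coincide. -/
/-!
On a simplicial set `K`, the degree-0 homology of the chain complex `F[K]` is the cokernel of
`d = δ₀ - δ₁ : F[K₁] → F[K₀]`, that is, the coequaliser of the two face maps after applying
`free`. Since `free` is a left adjoint, this is `free (π₀ K)`, naturally in `K`. Hence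
`H₀(-; F) ≅ free ∘ π₀ ∘ Sing`, and whiskering shows that every `H₀ ∘ T` is of the form
`free ∘ S`. Conversely, `π₀ (Sing (discrete A)) ≅ A` naturally in `A`, so
`free ∘ S ≅ H₀ ∘ discrete ∘ S`. The additive image depends only on the essential image.
-/

open CategoryTheory CategoryTheory.Limits

/-- Singular homology in degree `n` with coefficients in the field `F`, as a functor
`Top ⥤ Vect_F`: the composite of the singular simplicial set functor, the objectwise free
vector space functor, the alternating face map (singular chain) complex, and homology. -/
noncomputable def singularHomology (F : Type) [Field F] (n : ℕ) :
    TopCat.{0} ⥤ ModuleCat.{0} F :=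
  TopCat.toSSet ⋙ ((SimplicialObject.whiskering _ _).obj (ModuleCat.free F)) ⋙
    AlgebraicTopology.alternatingFaceMapComplex (ModuleCat F) ⋙
    HomologicalComplex.homologyFunctor _ _ n

/-- The additive image of a functor `T` into an additive category. -/
def AdditiveImage {C : Type*} {A : Type*} [Category C] [Category A] [Preadditive A]
    [HasBinaryBiproducts A] (T : C ⥤ A) (Y : A) : Prop :=
  ∃ (Z : C) (Y' : A), Nonempty (Y ⊞ Y' ≅ T.obj Z)

open Simplicial AlgebraicTopology TypeCat

universe u

lemma additiveImage_iff {C A : Type*} [Category C] [Category A] [Preadditive A]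
    [HasBinaryBiproducts A] (T : C ⥤ A) (Y : A) :
    AdditiveImage T Y ↔ ∃ Z, T.essImage Z ∧ ∃ Y' : A, Nonempty (Y ⊞ Y' ≅ Z) := by
  constructor
  · rintro ⟨Z, Y', ⟨e⟩⟩
    exact ⟨T.obj Z, T.obj_mem_essImage Z, Y', ⟨e⟩⟩
  · rintro ⟨_, ⟨Z, ⟨e⟩⟩, Y', ⟨e'⟩⟩
    exact ⟨Z, Y', ⟨e' ≪≫ e.symm⟩⟩

lemma CategoryTheory.Functor.essSurj_whiskeringRight_obj_of_iso_id (J : Type*) [Category J]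
    {C D : Type*} [Category C] [Category D] {P : C ⥤ D} {S : D ⥤ C} (e : S ⋙ P ≅ 𝟭 D) :
    ((Functor.whiskeringRight J C D).obj P).EssSurj where
  mem_essImage G :=
    ⟨G ⋙ S, ⟨Functor.associator _ _ _ ≪≫ Functor.isoWhiskerLeft G e ≪≫ G.rightUnitor⟩⟩

noncomputable def ChainComplex.homologyFunctorZeroIsoOpcyclesFunctor (V : Type*) [Category V]
    [HasZeroMorphisms V] [CategoryWithHomology V] :
    HomologicalComplex.homologyFunctor V (ComplexShape.down ℕ) 0 ≅
      HomologicalComplex.opcyclesFunctor V (ComplexShape.down ℕ) 0 :=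
  have (K : ChainComplex V ℕ) :
      IsIso ((HomologicalComplex.natTransHomologyι V (ComplexShape.down ℕ) 0).app K) :=
    inferInstanceAs (IsIso (K.homologyι 0))
  have := NatIso.isIso_of_isIso_app (HomologicalComplex.natTransHomologyι V (ComplexShape.down ℕ) 0)
  asIso (HomologicalComplex.natTransHomologyι V (ComplexShape.down ℕ) 0)

namespace AlgebraicTopology

variable {C : Type*} [Category C] [Preadditive C]

lemma alternatingFaceMapComplex_obj_d_one_zero (Y : SimplicialObject C) :
    ((alternatingFaceMapComplex C).obj Y).d 1 0 = Y.δ 0 - Y.δ 1 := by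
  simp [AlternatingFaceMapComplex.objD, Fin.sum_univ_two, sub_eq_add_neg]

lemma alternatingFaceMapComplex_obj_d_one_zero_comp_eq_zero {Y : SimplicialObject C} {Z : C}
    {π : Y _⦋0⦌ ⟶ Z} (w : Y.δ 1 ≫ π = Y.δ 0 ≫ π) :
    ((alternatingFaceMapComplex C).obj Y).d 1 0 ≫ π = 0 := by
  rw [alternatingFaceMapComplex_obj_d_one_zero, Preadditive.sub_comp, w, sub_self]

noncomputable def isColimitCokernelCoforkAlternatingFaceMapComplex {Y : SimplicialObject C}
    {Z : C} {π : Y _⦋0⦌ ⟶ Z} {w : Y.δ 1 ≫ π = Y.δ 0 ≫ π} (hc : IsColimit (Cofork.ofπ π w)) :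
    IsColimit (CokernelCofork.ofπ π (alternatingFaceMapComplex_obj_d_one_zero_comp_eq_zero w)) := by
  refine (IsColimit.equivOfNatIsoOfIso ?_ _ _ ?_).1
    (Preadditive.isColimitCokernelCoforkOfCofork hc)
  · refine parallelPair.ext (-Iso.refl _) (Iso.refl _) ?_ (by simp)
    simp [sub_eq_neg_add]
  · exact Cofork.ext (Iso.refl _) (by simp)

end AlgebraicTopology

namespace SSet

variable (R : Type u) [Ring R]

noncomputable abbrev freeChainComplex : SSet.{u} ⥤ ChainComplex (ModuleCat.{u} R) ℕ :=
  (SimplicialObject.whiskering _ _).obj (ModuleCat.free R) ⋙ alternatingFaceMapComplex _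

variable {R}

-- The source is written as a chain group, not as `free (X _⦋0⦌)`, so that rewriting next to
-- `pOpcycles` produces type-correct terms.
noncomputable def toFreeπ₀ (X : SSet.{u}) :
    ((freeChainComplex R).obj X).X 0 ⟶ (ModuleCat.free R).obj (π₀ X) :=
  (ModuleCat.free R).map (↾π₀.mk)

lemma freeChainComplex_d_comp_toFreeπ₀ (X : SSet.{u}) :
    ((freeChainComplex R).obj X).d 1 0 ≫ toFreeπ₀ X = 0 :=
  alternatingFaceMapComplex_obj_d_one_zero_comp_eq_zero
    (((ModuleCat.free R).map_comp _ _).symm.trans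
      (((ModuleCat.free R).congr_map X.coforkπ₀.condition).trans
        ((ModuleCat.free R).map_comp _ _)))

noncomputable def isColimitCokernelCoforkToFreeπ₀ (X : SSet.{u}) :
    IsColimit (CokernelCofork.ofπ _ (freeChainComplex_d_comp_toFreeπ₀ (R := R) X)) :=
  have := (ModuleCat.adj R).leftAdjoint_preservesColimits
  isColimitCokernelCoforkAlternatingFaceMapComplex
    ((isColimitMapCoconeCoforkEquiv (ModuleCat.free R) X.coforkπ₀.condition).1
      (isColimitOfPreserves (ModuleCat.free R) X.isColimitCoforkπ₀))

noncomputable def opcyclesFreeChainComplexIso (X : SSet.{u}) :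
    ((freeChainComplex R).obj X).opcycles 0 ≅ (ModuleCat.free R).obj (π₀ X) :=
  (((freeChainComplex R).obj X).opcyclesIsCokernel 1 0 (by simp)).coconePointUniqueUpToIso
    (isColimitCokernelCoforkToFreeπ₀ X)

lemma pOpcycles_opcyclesFreeChainComplexIso_hom (X : SSet.{u}) :
    ((freeChainComplex R).obj X).pOpcycles 0 ≫ (opcyclesFreeChainComplexIso X).hom =
      toFreeπ₀ X :=
  IsColimit.comp_coconePointUniqueUpToIso_hom
    (((freeChainComplex R).obj X).opcyclesIsCokernel 1 0 (by simp))
    (isColimitCokernelCoforkToFreeπ₀ X) WalkingParallelPair.one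

lemma freeChainComplex_map_f_zero_comp_toFreeπ₀ {X Y : SSet.{u}} (f : X ⟶ Y) :
    ((freeChainComplex R).map f).f 0 ≫ toFreeπ₀ Y =
      toFreeπ₀ X ≫ (ModuleCat.free R).map (↾mapπ₀ f) :=
  ((ModuleCat.free R).map_comp _ _).symm.trans
    (((ModuleCat.free R).congr_map (toπ₀NatTrans.naturality f)).trans
      ((ModuleCat.free R).map_comp _ _))

lemma opcyclesFreeChainComplexIso_hom_naturality {X Y : SSet.{u}} (f : X ⟶ Y) :
    HomologicalComplex.opcyclesMap ((freeChainComplex R).map f) 0 ≫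
      (opcyclesFreeChainComplexIso Y).hom =
    (opcyclesFreeChainComplexIso X).hom ≫ (ModuleCat.free R).map (↾mapπ₀ f) := by
  rw [← cancel_epi (((freeChainComplex R).obj X).pOpcycles 0),
    HomologicalComplex.p_opcyclesMap_assoc, pOpcycles_opcyclesFreeChainComplexIso_hom,
    ← Category.assoc, pOpcycles_opcyclesFreeChainComplexIso_hom,
    freeChainComplex_map_f_zero_comp_toFreeπ₀]

variable (R)

noncomputable def freeChainComplexHomologyZeroIso :
    freeChainComplex R ⋙ HomologicalComplex.homologyFunctor _ _ 0 ≅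
      π₀Functor ⋙ ModuleCat.free R :=
  Functor.isoWhiskerLeft _ (ChainComplex.homologyFunctorZeroIsoOpcyclesFunctor _) ≪≫
    NatIso.ofComponents opcyclesFreeChainComplexIso opcyclesFreeChainComplexIso_hom_naturality

end SSet

namespace TopCat

lemma toSSetObj₀Equiv_δ_one_eq_δ_zero {X : TopCat.{u}} [DiscreteTopology X]
    (s : toSSet.obj X _⦋1⦌) :
    toSSetObj₀Equiv ((toSSet.obj X).δ 1 s) = toSSetObj₀Equiv ((toSSet.obj X).δ 0 s) := by
  rw [← toSSetObj₁Equiv_apply_zero, ← toSSetObj₁Equiv_apply_one]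
  exact ((IsLocallyConstant.iff_continuous _).2 ((toSSetObj₁Equiv s).hom.continuous.comp
    continuous_uliftUp)).apply_eq_of_preconnectedSpace (0 : unitInterval) 1

lemma toSSetObj₀Equiv_eq_of_edge {X : TopCat.{u}} [DiscreteTopology X]
    {x₀ x₁ : toSSet.obj X _⦋0⦌} (e : SSet.Edge x₀ x₁) :
    toSSetObj₀Equiv x₀ = toSSetObj₀Equiv x₁ :=
  (congrArg _ e.src_eq).symm.trans
    ((toSSetObj₀Equiv_δ_one_eq_δ_zero e.edge).trans (congrArg _ e.tgt_eq))

noncomputable def toSSetπ₀EquivOfDiscrete (X : TopCat.{u}) [DiscreteTopology X] :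
    (toSSet.obj X).π₀ ≃ X where
  toFun := SSet.π₀.lift toSSetObj₀Equiv fun _ _ e => toSSetObj₀Equiv_eq_of_edge e
  invFun x := SSet.π₀.mk (toSSetObj₀Equiv.symm x)
  left_inv x := by induction x using SSet.π₀.rec; simp
  right_inv x := by simp

noncomputable def discreteCompToSSetCompπ₀FunctorIso :
    discrete.{u} ⋙ toSSet ⋙ SSet.π₀Functor ≅ 𝟭 (Type u) :=
  NatIso.ofComponents (fun A => (toSSetπ₀EquivOfDiscrete (discrete.obj A)).toIso) fun f => by
    ext x
    induction x using SSet.π₀.rec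
    rfl

end TopCat

noncomputable def singularHomologyZeroIso (F : Type) [Field F] :
    singularHomology F 0 ≅ TopCat.toSSet ⋙ SSet.π₀Functor ⋙ ModuleCat.free F :=
  Functor.isoWhiskerLeft TopCat.toSSet (SSet.freeChainComplexHomologyZeroIso F)

/-- For a small category `X` and a field `F`, the essential image of
`H₀(-, F) : rep(X, Top) ⥤ rep(X, Vect_F)` coincides with the essential image of
`free : rep(X, Set) ⥤ rep(X, Vect_F)`; in particular the additive images also coincide. -/
theorem stmt0 (X : Type) [SmallCategory X] (F : Type) [Field F] :
    (∀ R : X ⥤ ModuleCat.{0} F,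
      ((Functor.whiskeringRight X TopCat.{0} (ModuleCat.{0} F)).obj (singularHomology F 0)).essImage R ↔
      ((Functor.whiskeringRight X (Type 0) (ModuleCat.{0} F)).obj (ModuleCat.free F)).essImage R) ∧
    (∀ R : X ⥤ ModuleCat.{0} F,
      AdditiveImage ((Functor.whiskeringRight X TopCat.{0} (ModuleCat.{0} F)).obj (singularHomology F 0)) R ↔
      AdditiveImage ((Functor.whiskeringRight X (Type 0) (ModuleCat.{0} F)).obj (ModuleCat.free F)) R) := by
  have := Functor.essSurj_whiskeringRight_obj_of_iso_id X TopCat.discreteCompToSSetCompπ₀FunctorIso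
  have hess :
      ((Functor.whiskeringRight X _ _).obj (singularHomology F 0)).essImage =
        ((Functor.whiskeringRight X _ _).obj (ModuleCat.free F)).essImage := by
    rw [Functor.essImage_eq_of_natIso
      ((Functor.whiskeringRight X _ _).mapIso (singularHomologyZeroIso F))]
    exact Functor.essImage_comp_of_essSurj
      (F := (Functor.whiskeringRight X _ _).obj (TopCat.toSSet ⋙ SSet.π₀Functor))
      (G := (Functor.whiskeringRight X _ _).obj (ModuleCat.free F))
  exact ⟨fun R => by rw [hess], fun R => by simp only [additiveImage_iff, hess]⟩
end

section
/- Let X be a finite category (finitely many objects and morphisms), F a field, and R ∈ rep(X, vect_F) a functor taking finite-dimensional values. Then R lies in the additive image of free : rep(X, Set) → rep(X, Vect_F) if and only if R lies in the additive image of free restricted to representations in finite sets; that is, R is a direct summand of free(S) for some S ∈ rep(X, Set) if and only if R is a direct summand of free(S') for some S' ∈ rep(X, Set) with S'(x) finite for every object x. -/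
/-!
A summand `R` of `free S` is the same as a split mono `ι : R ⟶ free S`. As every `R x` is
finite-dimensional, `ι` takes values supported on finite sets `T x ⊆ S x`. Since `X` has finitely
many morphisms, the subfunctor `S'` of `S` generated by the `T x` is still pointwise finite, and
`ι` factors through `free S' ⟶ free S`; the factor is again a split mono, so `R` is a summand
of `free S'`.
-/

universe u v w

open CategoryTheory CategoryTheory.Limits

theorem Finsupp.mapDomain_subtypeVal_subtypeDomain {α M : Type*} [AddCommMonoid M] {s : Set α}
    {w : α →₀ M} (h : ↑w.support ⊆ s) :
    mapDomain Subtype.val (w.subtypeDomain (· ∈ s)) = w := by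
  have : w.subtypeDomain (· ∈ s) = comapDomain Subtype.val w Subtype.val_injective.injOn := by
    ext; rfl
  rw [this, mapDomain_comapDomain _ Subtype.val_injective w (by simpa using h)]

theorem Module.Finite.exists_finset_support_subset {R M N α : Type*} [Semiring R]
    [AddCommMonoid M] [Module R M] [Module.Finite R M] [AddCommMonoid N] [Module R N]
    (f : M →ₗ[R] α →₀ N) : ∃ T : Finset α, ∀ v, ↑(f v).support ⊆ (T : Set α) := by
  classical
  obtain ⟨t, ht⟩ := Module.finite_def.mp ‹_›
  refine ⟨t.biUnion fun v => (f v).support, fun v => ?_⟩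
  have hspan : Submodule.span R (t : Set M) ≤
      (Finsupp.supported N R (t.biUnion fun v => (f v).support : Set α)).comap f := by
    rw [Submodule.span_le]
    intro w hw
    exact (Finsupp.mem_supported R _).mpr
      (Finset.coe_subset.mpr (Finset.subset_biUnion_of_mem (fun v => (f v).support) hw))
  exact hspan (ht ▸ Submodule.mem_top)

namespace CategoryTheory

theorem exists_biprod_iso_iff_exists_isSplitMono {C : Type u} [Category.{v} C]
    [Abelian C] {R M : C} : (∃ R' : C, Nonempty (R ⊞ R' ≅ M)) ↔ ∃ f : R ⟶ M, IsSplitMono f := by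
  constructor
  · rintro ⟨R', ⟨e⟩⟩
    exact ⟨biprod.inl ≫ e.hom, inferInstance⟩
  · rintro ⟨f, hf⟩
    exact ⟨cokernel f, ⟨(biprod.uniqueUpToIso _ _
        (isBilimitBinaryBiconeOfIsSplitMonoOfCokernel (cokernelIsCokernel f))).symm⟩⟩

namespace NatTrans

variable {C : Type u} [Category.{v} C] {D : Type*} [Category D] {K G H : C ⥤ D}
  (m : G ⟶ H) [∀ x, Mono (m.app x)] (ι : K ⟶ H)
  (l : ∀ x, K.obj x ⟶ G.obj x) (hl : ∀ x, l x ≫ m.app x = ι.app x)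

def liftOfFactorsApp : K ⟶ G where
  app := l
  naturality x y g := by
    rw [← cancel_mono (m.app y), Category.assoc, hl, Category.assoc, m.naturality,
      reassoc_of% hl, ι.naturality]

theorem liftOfFactorsApp_comp : liftOfFactorsApp m ι l hl ≫ m = ι := by
  ext x
  exact hl x

end NatTrans

namespace Subfunctor

variable {C : Type u} [Category.{v} C] {S : C ⥤ Type w}

def generatedBy (T : ∀ x, Set (S.obj x)) : Subfunctor S where
  obj x := ⋃ (y : C) (f : y ⟶ x), S.map f '' T y
  map {x x'} g := by
    simp only [Set.mem_iUnion, Set.mem_image, Set.subset_def, Set.mem_preimage]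
    rintro _ ⟨y, f, u, hu, rfl⟩
    exact ⟨y, f ≫ g, u, hu, by simp⟩

theorem subset_generatedBy_obj (T : ∀ x, Set (S.obj x)) (x : C) :
    T x ⊆ (generatedBy T).obj x := fun u hu =>
  Set.mem_iUnion₂.mpr ⟨x, 𝟙 x, u, hu, by simp⟩

theorem finite_generatedBy_obj [Finite C] [∀ x y : C, Finite (x ⟶ y)] {T : ∀ x, Set (S.obj x)}
    (hT : ∀ x, (T x).Finite) (x : C) : ((generatedBy T).obj x).Finite :=
  Set.finite_iUnion fun y => Set.finite_iUnion fun _ => (hT y).image _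

section Free

variable {R : Type w} [Ring R]

instance mono_whiskerRight_ι_free_app (P : Subfunctor S) (x : C) :
    Mono ((Functor.whiskerRight P.ι (ModuleCat.free R)).app x) := by
  rw [ModuleCat.mono_iff_injective]
  exact Finsupp.mapDomain_injective Subtype.val_injective

noncomputable def liftFree {M : C ⥤ ModuleCat R} (P : Subfunctor S)
    (ι : M ⟶ S ⋙ ModuleCat.free R) (h : ∀ x v, ↑(ι.app x v).support ⊆ P.obj x) :
    M ⟶ P.toFunctor ⋙ ModuleCat.free R :=
  NatTrans.liftOfFactorsApp (Functor.whiskerRight P.ι _) ι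
    (fun x => ModuleCat.ofHom ((Finsupp.lsubtypeDomain (P.obj x)).comp (ι.app x).hom))
    (fun x => by ext v; exact Finsupp.mapDomain_subtypeVal_subtypeDomain (h x v))

theorem liftFree_comp {M : C ⥤ ModuleCat R} (P : Subfunctor S)
    (ι : M ⟶ S ⋙ ModuleCat.free R) (h : ∀ x v, ↑(ι.app x v).support ⊆ P.obj x) :
    P.liftFree ι h ≫ Functor.whiskerRight P.ι _ = ι :=
  NatTrans.liftOfFactorsApp_comp ..

end Free

end Subfunctor

end CategoryTheory

/-- For a finite category `X` and a pointwise finite-dimensional representation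
`R`, being a direct summand of `free(S)` for some representation `S` in sets is equivalent to
being a direct summand of `free(S')` for some representation `S'` in *finite* sets. -/
theorem stmt2 (X : Type) [SmallCategory X] [Fintype X] [∀ a b : X, Finite (a ⟶ b)]
    (F : Type) [Field F] (R : X ⥤ ModuleCat.{0} F)
    (hR : ∀ x : X, FiniteDimensional F (R.obj x)) :
    (∃ (S : X ⥤ Type 0) (R' : X ⥤ ModuleCat.{0} F),
        Nonempty (R ⊞ R' ≅ S ⋙ ModuleCat.free F)) ↔
    (∃ S : X ⥤ Type 0, (∀ x : X, Finite (S.obj x)) ∧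
        ∃ R' : X ⥤ ModuleCat.{0} F, Nonempty (R ⊞ R' ≅ S ⋙ ModuleCat.free F)) := by
  simp only [exists_biprod_iso_iff_exists_isSplitMono]
  refine ⟨fun ⟨S, ι, _⟩ => ?_, fun ⟨S, _, hS⟩ => ⟨S, hS⟩⟩
  choose T hT using fun x => Module.Finite.exists_finset_support_subset (ι.app x).hom
  let P := Subfunctor.generatedBy fun x => (T x : Set (S.obj x))
  have hsupp : ∀ x v, ↑(ι.app x v).support ⊆ P.obj x := fun x v =>
    (hT x v).trans (Subfunctor.subset_generatedBy_obj (fun x => (T x : Set (S.obj x))) x)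
  refine ⟨P.toFunctor, fun x => (Subfunctor.finite_generatedBy_obj
    (fun y => (T y).finite_toSet) x).to_subtype, P.liftFree ι hsupp,
    IsSplitMono.mk' ⟨Functor.whiskerRight P.ι _ ≫ retraction ι, ?_⟩⟩
  rw [← Category.assoc, P.liftFree_comp, IsSplitMono.id]
end

section
/- Let X be a small category and F a field. For every R ∈ rep(X, Set_*) there is an isomorphism free(forget(R)) ≅ free_*(R) ⊕ F_X in rep(X, Vect_F), where F_X is the constant representation assigning F to every object and the identity to every morphism. Consequently, the additive images of the functors free : rep(X, Set) → rep(X, Vect_F) and free_* : rep(X, Set_*) → rep(X, Vect_F) coincide. -/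
open CategoryTheory CategoryTheory.Limits

/-!
For a pointed set `S`, the augmentation `ε : F[S] → F` (sum of coefficients) is split by
`c ↦ c • [*]`, and `ker ε` maps isomorphically onto `free_*(S) = F[S] / F • [*]`, with inverse
`[v] ↦ v - ε(v) • [*]`. Since pointed maps fix the basepoint, all four maps are natural, so
`free ∘ forget ≅ free_* ⊞ F` already as functors `Set_* ⥤ Vect_F`; whiskering with `R` gives the
first claim. For the additive images: `free(S) ≅ free_*(S ⊔ {*})`, and conversely `free_*(R)` is
a summand of `free(forget R)` by the first claim.
-/

/-- The reduced free vector space functor `free_* : Set_* ⥤ Vect_F`. -/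
noncomputable def freeStar (F : Type) [Field F] : Pointed.{0} ⥤ ModuleCat.{0} F where
  obj S := ModuleCat.of F ((S.X →₀ F) ⧸ Submodule.span F {Finsupp.single S.point (1 : F)})
  map {S T} f := ModuleCat.ofHom <| Submodule.mapQ _ _ (Finsupp.lmapDomain F F f.toFun)
    (by
      rw [Submodule.span_le, Set.singleton_subset_iff, SetLike.mem_coe, Submodule.mem_comap]
      simp only [Finsupp.lmapDomain_apply, Finsupp.mapDomain_single, f.map_point]
      exact Submodule.mem_span_singleton_self _)
  map_id S := by
    refine ModuleCat.hom_ext (Submodule.linearMap_qext _ ?_)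
    ext x
    dsimp
    erw [Submodule.mapQ_apply]
    simp only [Finsupp.lmapDomain_apply, Finsupp.mapDomain_id]
  map_comp {S T U} f g := by
    refine ModuleCat.hom_ext (Submodule.linearMap_qext _ ?_)
    ext x
    dsimp
    erw [Submodule.mapQ_apply]
    simp only [Finsupp.lmapDomain_apply, Finsupp.mapDomain_single, Function.comp_apply]

namespace AdditiveImage

open ZeroObject

variable {C C' A : Type*} [Category C] [Category C'] [Category A] [Preadditive A]
  [HasBinaryBiproducts A] {T : C ⥤ A} {T' : C' ⥤ A}

lemma of_iso [HasZeroObject A] {Y : A} {Z : C} (e : Y ≅ T.obj Z) : AdditiveImage T Y :=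
  ⟨Z, 0, ⟨(isoBiprodZero (isZero_zero A)).symm ≪≫ e⟩⟩

lemma trans (h : ∀ Z', AdditiveImage T (T'.obj Z')) {Y : A} (hY : AdditiveImage T' Y) :
    AdditiveImage T Y := by
  obtain ⟨Z', Y', ⟨e⟩⟩ := hY
  obtain ⟨Z, W, ⟨e'⟩⟩ := h Z'
  exact ⟨Z, Y' ⊞ W,
    ⟨(biprod.associator Y Y' W).symm ≪≫ biprod.mapIso e (Iso.refl W) ≪≫ e'⟩⟩

end AdditiveImage

noncomputable section

namespace Finsupp

variable (R : Type*) [Semiring R]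

def augmentation (A : Type*) : (A →₀ R) →ₗ[R] R := linearCombination R fun _ => 1

@[simp]
lemma augmentation_single {A : Type*} (a : A) (c : R) : augmentation R A (single a c) = c := by
  simp [augmentation]

end Finsupp

namespace freeStar

variable (F : Type) [Field F]

def quotientMap : forget Pointed ⋙ ModuleCat.free F ⟶ freeStar F where
  app _ := ModuleCat.ofHom (Submodule.mkQ _)
  naturality _ _ _ := ModuleCat.hom_ext (Finsupp.lhom_ext fun _ _ => rfl)

def augmentationMap :
    forget Pointed ⋙ ModuleCat.free F ⟶ (Functor.const Pointed).obj (ModuleCat.of F F) where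
  app S := ModuleCat.ofHom (Finsupp.augmentation F S.X)
  naturality _ _ _ := ModuleCat.hom_ext (Finsupp.lhom_ext fun _ _ => by simp [ModuleCat.free])

def basepointMap :
    (Functor.const Pointed).obj (ModuleCat.of F F) ⟶ forget Pointed ⋙ ModuleCat.free F where
  app S := ModuleCat.ofHom (Finsupp.lsingle S.point)
  naturality _ _ f := ModuleCat.hom_ext (LinearMap.ext fun c => by
    change Finsupp.single _ c = Finsupp.mapDomain f.toFun (Finsupp.single _ c)
    rw [Finsupp.mapDomain_single, f.map_point])

lemma span_single_point_le_ker (S : Pointed.{0}) :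
    Submodule.span F {Finsupp.single S.point (1 : F)} ≤
      LinearMap.ker (LinearMap.id - Finsupp.lsingle S.point ∘ₗ Finsupp.augmentation F S.X) := by
  simp

def sectionMap : freeStar F ⟶ forget Pointed ⋙ ModuleCat.free F where
  app S := ModuleCat.ofHom (Submodule.liftQ _ _ (span_single_point_le_ker F S))
  naturality S T f := ModuleCat.hom_ext (Submodule.linearMap_qext _ (Finsupp.lhom_ext fun a c => by
    change Finsupp.mapDomain f.toFun (Finsupp.single a c) - Finsupp.single T.point
        (Finsupp.augmentation F _ (Finsupp.mapDomain f.toFun (Finsupp.single a c)))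
      = Finsupp.mapDomain f.toFun (Finsupp.single a c -
          Finsupp.single S.point (Finsupp.augmentation F _ (Finsupp.single a c)))
    simp [Finsupp.mapDomain_sub, f.map_point]))

lemma mk_single_point_eq_zero (S : Pointed.{0}) (c : F) :
    (Submodule.Quotient.mk (Finsupp.single S.point c) : (freeStar F).obj S) = 0 :=
  (Submodule.Quotient.mk_eq_zero _).2 (Submodule.mem_span_singleton.2 ⟨c, by simp⟩)

def freeForgetBicone :
    BinaryBicone (freeStar F) ((Functor.const Pointed).obj (ModuleCat.of F F)) where
  pt := forget Pointed ⋙ ModuleCat.free F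
  fst := quotientMap F
  snd := augmentationMap F
  inl := sectionMap F
  inr := basepointMap F
  inl_fst := by
    ext S : 2
    refine ModuleCat.hom_ext <| Submodule.linearMap_qext _ <| Finsupp.lhom_ext fun a c => ?_
    change Submodule.Quotient.mk (Finsupp.single a c - Finsupp.single S.point
      (Finsupp.augmentation F _ (Finsupp.single a c))) = Submodule.Quotient.mk (Finsupp.single a c)
    simp [Submodule.Quotient.mk_sub, mk_single_point_eq_zero]
  inl_snd := by
    ext S : 2
    refine ModuleCat.hom_ext <| Submodule.linearMap_qext _ <| Finsupp.lhom_ext fun a c => ?_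
    change Finsupp.augmentation F _ (Finsupp.single a c - Finsupp.single S.point
      (Finsupp.augmentation F _ (Finsupp.single a c))) = 0
    simp
  inr_fst := by
    ext S : 2
    exact ModuleCat.hom_ext (LinearMap.ext (mk_single_point_eq_zero F S))
  inr_snd := by
    ext S : 2
    exact ModuleCat.hom_ext (LinearMap.ext (Finsupp.augmentation_single F S.point))

lemma freeForgetBicone_total : (freeForgetBicone F).fst ≫ (freeForgetBicone F).inl +
    (freeForgetBicone F).snd ≫ (freeForgetBicone F).inr = 𝟙 _ := by
  ext S : 2
  refine ModuleCat.hom_ext <| Finsupp.lhom_ext fun a c => ?_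
  change Finsupp.single a c - Finsupp.single S.point (Finsupp.augmentation F _ (Finsupp.single a c))
    + Finsupp.single S.point (Finsupp.augmentation F _ (Finsupp.single a c)) = Finsupp.single a c
  exact sub_add_cancel _ _

def freeForgetIso :
    forget Pointed ⋙ ModuleCat.free F ≅
      freeStar F ⊞ (Functor.const Pointed).obj (ModuleCat.of F F) :=
  biprod.uniqueUpToIso _ _ (isBinaryBilimitOfTotal _ (freeForgetBicone_total F))

def compFreeForgetIso {X : Type} [SmallCategory X] (R : X ⥤ Pointed.{0}) :
    R ⋙ forget Pointed ⋙ ModuleCat.free F ≅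
      (R ⋙ freeStar F) ⊞ (Functor.const X).obj (ModuleCat.of F F) :=
  have := preservesBinaryBiproducts_of_preservesBiproducts
    ((Functor.whiskeringLeft X Pointed (ModuleCat F)).obj R)
  Functor.isoWhiskerLeft R (freeForgetIso F) ≪≫
    ((Functor.whiskeringLeft X Pointed (ModuleCat F)).obj R).mapBiprod _ _

lemma span_single_none_le_ker_lcomapDomain (A : Type) :
    Submodule.span F {Finsupp.single (none : Option A) (1 : F)} ≤
      LinearMap.ker (Finsupp.lcomapDomain some (Option.some_injective A)) := by
  simp

def freeEquivFreeStarOption (A : Type) :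
    (A →₀ F) ≃ₗ[F] (freeStar F).obj (typeToPointed.obj A) :=
  LinearEquiv.ofLinearMap ((Submodule.mkQ _) ∘ₗ Finsupp.lmapDomain F F some)
    (Submodule.liftQ _ _ (span_single_none_le_ker_lcomapDomain F A))
    (Submodule.linearMap_qext _ (Finsupp.lhom_ext fun (o : Option A) c => by
      change Submodule.Quotient.mk (p := Submodule.span F {Finsupp.single none 1})
        (Finsupp.mapDomain some (Finsupp.comapDomain some (Finsupp.single o c)
          (Option.some_injective A).injOn)) = Submodule.Quotient.mk (Finsupp.single o c)
      cases o with
      | none =>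
        rw [Finsupp.comapDomain_single_of_not_mem_range (by simp), Finsupp.mapDomain_zero]
        exact (mk_single_point_eq_zero F (typeToPointed.obj A) c).symm
      | some a => simp))
    (Finsupp.lhom_ext fun a c => by
      change Finsupp.comapDomain some (Finsupp.mapDomain some (Finsupp.single a c))
        (Option.some_injective A).injOn = Finsupp.single a c
      simp)

def freeIsoTypeToPointedComp : ModuleCat.free F ≅ typeToPointed ⋙ freeStar F :=
  NatIso.ofComponents (fun A => (freeEquivFreeStarOption F A).toModuleIso)
    (fun f => ModuleCat.hom_ext (Finsupp.lhom_ext fun a c => by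
      change Submodule.Quotient.mk
          (Finsupp.mapDomain some (Finsupp.mapDomain f (Finsupp.single a c))) =
        Submodule.Quotient.mk (Finsupp.mapDomain (Option.map f)
          (Finsupp.mapDomain some (Finsupp.single a c)))
      simp))

end freeStar

end

/-- For every representation `R` of `X` in pointed sets,
`free(forget R) ≅ free_*(R) ⊞ F_X` where `F_X` is the constant representation with value `F`;
consequently the additive images of `free` and `free_*` coincide. -/
theorem stmt4 (X : Type) [SmallCategory X] (F : Type) [Field F] :
    (∀ R : X ⥤ Pointed.{0},
      Nonempty ((R ⋙ forget Pointed ⋙ ModuleCat.free F) ≅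
        (R ⋙ freeStar F) ⊞ (Functor.const X).obj (ModuleCat.of F F))) ∧
    (∀ M : X ⥤ ModuleCat.{0} F,
      AdditiveImage ((Functor.whiskeringRight X (Type 0) (ModuleCat.{0} F)).obj (ModuleCat.free F)) M ↔
      AdditiveImage ((Functor.whiskeringRight X Pointed.{0} (ModuleCat.{0} F)).obj (freeStar F)) M) := by
  refine ⟨fun R => ⟨freeStar.compFreeForgetIso F R⟩, fun M => ⟨?_, ?_⟩⟩
  · exact AdditiveImage.trans fun S => AdditiveImage.of_iso (Z := S ⋙ typeToPointed)
      (Functor.isoWhiskerLeft S (freeStar.freeIsoTypeToPointedComp F))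
  · exact AdditiveImage.trans fun R =>
      ⟨R ⋙ forget Pointed, _, ⟨(freeStar.compFreeForgetIso F R).symm⟩⟩
end

section
/- Let F be a finite field and X a small category. Every R ∈ rep(X, Vect_F) admitting a near-multiplicative basis — a choice of basis B(x) of R(x) for every object x such that for every morphism f : x → y and every b ∈ B(x), R(f)(b) is a scalar multiple (possibly zero) of an element of B(y) — lies in the additive image of free : rep(X, Set) → rep(X, Vect_F). -/
/-!
The counit `free (U R) ⟶ R` of the free–forgetful adjunction, `U` the underlying-set functor, is
a split epimorphism of representations, so `R` is a direct summand of `free (U R)`.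
Over a finite field `F` the map `σ v = -∑ₐ a⁻¹ • ([a • v] - [0])` is a section of the counit
on underlying sets (because `∑ₐ a⁻¹ a = q - 1 = -1` in `F`) which commutes with scalars and with
every linear map. It is not additive, but its linear extension from a near-multiplicative basis
is natural: a structure map sends a basis vector `b` to some `c • b'`, and `σ (c • b') = c • σ b'`.
-/

open CategoryTheory CategoryTheory.Limits

theorem AdditiveImage.of_isSplitEpi {C A : Type*} [Category C] [Category A] [Preadditive A]
    [HasBinaryBiproducts A] {T : C ⥤ A} {Z : C} {Y : A} (p : T.obj Z ⟶ Y) [IsSplitEpi p]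
    [HasKernel p] : AdditiveImage T Y :=
  ⟨Z, kernel p, ⟨biprod.braiding _ _ ≪≫
    (biprod.uniqueUpToIso _ _ (isBilimitBinaryBiconeOfIsSplitEpiOfKernel (kernelIsKernel p))).symm⟩⟩

theorem FiniteField.sum_inv_mul_self (F : Type*) [Field F] [Fintype F] :
    ∑ a : F, a⁻¹ * a = -1 := by
  classical
  rw [← Finset.sum_erase (a := 0) _ (by simp),
    Finset.sum_congr rfl fun a ha => inv_mul_cancel₀ (Finset.ne_of_mem_erase ha),
    Finset.sum_const, Finset.card_erase_of_mem (Finset.mem_univ _), Finset.card_univ,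
    nsmul_one, Nat.cast_sub Fintype.card_pos, FiniteField.cast_card_eq_zero, Nat.cast_one,
    zero_sub]

section HomogeneousSection

variable {F M N : Type*} [Field F] [Fintype F] [AddCommGroup M] [Module F M]
  [AddCommGroup N] [Module F N]

variable (F) in
noncomputable def homogeneousSection (v : M) : M →₀ F :=
  -∑ a : F, a⁻¹ • (Finsupp.single (a • v) 1 - Finsupp.single 0 1)

theorem linearCombination_homogeneousSection (v : M) :
    Finsupp.linearCombination F id (homogeneousSection F v) = v := by
  simp only [homogeneousSection, map_neg, map_sum, map_smul, map_sub,
    Finsupp.linearCombination_single, id, smul_zero, sub_zero, smul_smul, one_mul,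
    ← Finset.sum_smul, FiniteField.sum_inv_mul_self, neg_smul, one_smul, neg_neg]

theorem homogeneousSection_smul (c : F) (v : M) :
    homogeneousSection F (c • v) = c • homogeneousSection F v := by
  rcases eq_or_ne c 0 with rfl | hc
  · simp [homogeneousSection]
  · rw [homogeneousSection, homogeneousSection, smul_neg, Finset.smul_sum]
    congr 1
    refine Fintype.sum_equiv (Equiv.mulRight₀ c hc) _ _ fun a => ?_
    rw [Equiv.mulRight₀_apply, mul_smul a c v, smul_smul c, mul_inv, mul_left_comm,
      mul_inv_cancel₀ hc, mul_one]

theorem lmapDomain_homogeneousSection (g : M →ₗ[F] N) (v : M) :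
    Finsupp.lmapDomain F F g (homogeneousSection F v) = homogeneousSection F (g v) := by
  simp only [homogeneousSection, map_neg, map_sum, map_smul, map_sub, Finsupp.lmapDomain_apply,
    Finsupp.mapDomain_single, map_zero]

end HomogeneousSection

namespace Module.Basis

variable {ι κ F M N : Type*} [Field F] [Fintype F] [AddCommGroup M] [Module F M]
  [AddCommGroup N] [Module F N]

noncomputable def freeSection (b : Basis ι F M) : M →ₗ[F] M →₀ F :=
  b.constr F fun i => homogeneousSection F (b i)

theorem freeSection_apply_self (b : Basis ι F M) (i : ι) :
    b.freeSection (b i) = homogeneousSection F (b i) :=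
  constr_basis _ _ _ _

theorem linearCombination_comp_freeSection (b : Basis ι F M) :
    Finsupp.linearCombination F id ∘ₗ b.freeSection = LinearMap.id :=
  b.ext fun i => by
    rw [LinearMap.comp_apply, freeSection_apply_self, linearCombination_homogeneousSection,
      LinearMap.id_apply]

theorem freeSection_comp_of_forall_eq_smul (bM : Basis ι F M) (bN : Basis κ F N) {g : M →ₗ[F] N}
    (hg : ∀ i, ∃ j, ∃ c : F, g (bM i) = c • bN j) :
    bN.freeSection ∘ₗ g = Finsupp.lmapDomain F F g ∘ₗ bM.freeSection :=
  bM.ext fun i => by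
    obtain ⟨j, c, hc⟩ := hg i
    rw [LinearMap.comp_apply, LinearMap.comp_apply, hc, map_smul, freeSection_apply_self,
      freeSection_apply_self, ← homogeneousSection_smul, ← hc, lmapDomain_homogeneousSection]

end Module.Basis

section NearMultiplicative

universe u

variable {X : Type*} [Category X] {F : Type u} [Field F] {ι : X → Type*}

def IsNearMultiplicative (R : X ⥤ ModuleCat.{u} F) (b : ∀ x, Module.Basis (ι x) F (R.obj x)) :
    Prop :=
  ∀ ⦃x y : X⦄ (f : x ⟶ y) (i : ι x), ∃ j, ∃ c : F, R.map f (b x i) = c • b y j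

variable [Fintype F] {R : X ⥤ ModuleCat.{u} F} {b : ∀ x, Module.Basis (ι x) F (R.obj x)}

noncomputable def IsNearMultiplicative.freeSection (hb : IsNearMultiplicative R b) :
    R ⟶ R ⋙ forget (ModuleCat F) ⋙ ModuleCat.free F where
  app x := ModuleCat.ofHom (b x).freeSection
  naturality x y f := ModuleCat.hom_ext ((b x).freeSection_comp_of_forall_eq_smul (b y) (hb f))

theorem IsNearMultiplicative.freeSection_comp_counit (hb : IsNearMultiplicative R b) :
    hb.freeSection ≫ Functor.whiskerLeft R (ModuleCat.adj F).counit = 𝟙 R :=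
  NatTrans.ext <| funext fun x => ModuleCat.hom_ext (b x).linearCombination_comp_freeSection

theorem IsNearMultiplicative.additiveImage_free (hb : IsNearMultiplicative R b) :
    AdditiveImage ((Functor.whiskeringRight X (Type u) (ModuleCat.{u} F)).obj (ModuleCat.free F))
      R :=
  have : IsSplitEpi (Functor.whiskerLeft R (ModuleCat.adj F).counit) :=
    ⟨⟨⟨hb.freeSection, hb.freeSection_comp_counit⟩⟩⟩
  AdditiveImage.of_isSplitEpi (Z := R ⋙ forget _) (Functor.whiskerLeft R (ModuleCat.adj F).counit)

end NearMultiplicative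

/-- Over a finite field, every representation admitting a near-multiplicative
basis (every structure map sends every basis vector to a scalar multiple, possibly zero, of a
basis vector) lies in the additive image of `free : rep(X, Set) ⥤ rep(X, Vect_F)`. -/
theorem stmt9 (X : Type) [SmallCategory X] (F : Type) [Field F] [Finite F]
    (R : X ⥤ ModuleCat.{0} F)
    (B : ∀ x : X, Set (R.obj x))
    (hB : ∀ x : X, LinearIndependent F ((↑) : B x → R.obj x) ∧ Submodule.span F (B x) = ⊤)
    (hmap : ∀ (x y : X) (f : x ⟶ y), ∀ b ∈ B x,
      ∃ b' ∈ B y, ∃ lam : F, R.map f b = lam • b') :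
    AdditiveImage ((Functor.whiskeringRight X (Type 0) (ModuleCat.{0} F)).obj (ModuleCat.free F)) R := by
  have := Fintype.ofFinite F
  let basis x : Module.Basis (B x) F (R.obj x) :=
    .mk (hB x).1 (by rw [Subtype.range_coe, (hB x).2])
  have hbasis : IsNearMultiplicative R basis := fun x y f ⟨b, hb⟩ => by
    obtain ⟨b', hb', c, hc⟩ := hmap x y f b hb
    exact ⟨⟨b', hb'⟩, c, by simpa [basis] using hc⟩
  exact hbasis.additiveImage_free
end

section
/- Let F be a field and ζ ∈ F a primitive n-th root of unity (an element of multiplicative order exactly n). Then: (1) the n × n matrix Z = (ζ^{ij})_{i,j = 0,…,n−1} is invertible; and (2) for every x ∈ F with xⁿ = 1, the matrix Z · diag(1, x, x², …, x^{n−1}) · Z⁻¹ is a permutation matrix. -/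
open Matrix

/-! `Z = (ζ ^ (i * j))` is the Vandermonde matrix of the distinct nodes `1, ζ, …, ζ ^ (n - 1)`,
hence invertible. Every `x` with `xⁿ = 1` is a power `ζ ^ k`, and multiplying column `j` of `Z`
by `ζ ^ (k * j)` shifts the row index `i` to `i + k (mod n)`, i.e. `Z · diag(xʲ) = P · Z` for the
cyclic shift permutation matrix `P`. -/

section

variable {R : Type*} [CommRing R] {n : ℕ}

theorem of_pow_mul_eq_vandermonde (ζ : R) :
    (of fun i j : Fin n => ζ ^ ((i : ℕ) * (j : ℕ))) = vandermonde fun i : Fin n => ζ ^ (i : ℕ) := by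
  ext i j
  rw [of_apply, vandermonde_apply, pow_mul]

theorem vandermonde_pow_mul_diagonal_pow [NeZero n] {ζ : R} (hζ : ζ ^ n = 1) (k : Fin n) :
    vandermonde (fun i : Fin n => ζ ^ (i : ℕ)) * diagonal (fun j : Fin n => (ζ ^ (k : ℕ)) ^ (j : ℕ)) =
      (Equiv.addRight k).permMatrix R * vandermonde (fun i : Fin n => ζ ^ (i : ℕ)) := by
  rw [Equiv.Perm.permMatrix, PEquiv.toMatrix_toPEquiv_mul]
  ext i j
  simp only [mul_diagonal, submatrix_apply, vandermonde_apply, Equiv.coe_addRight, id_eq,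
    ← pow_mul, ← pow_add, ← add_mul, Fin.val_add]
  exact pow_eq_pow_of_modEq ((Nat.mod_modEq _ n).mul_right _).symm hζ

end

theorem IsPrimitiveRoot.det_vandermonde_pow_ne_zero {R : Type*} [CommRing R] [IsDomain R]
    {n : ℕ} {ζ : R} (hζ : IsPrimitiveRoot ζ n) :
    (vandermonde fun i : Fin n => ζ ^ (i : ℕ)).det ≠ 0 :=
  det_vandermonde_ne_zero_iff.2 fun i j h => Fin.ext (hζ.pow_inj i.isLt j.isLt h)

/-- For a primitive `n`-th root of unity `ζ` in a field `F` (an element of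
multiplicative order exactly `n`), the Vandermonde-type matrix `Z = (ζ^{ij})` is invertible,
and for every `x` with `xⁿ = 1` the conjugate `Z · diag(1, x, …, x^{n-1}) · Z⁻¹` is a
permutation matrix. -/
theorem stmt10 (F : Type) [Field F] (n : ℕ) (hn : 0 < n) (ζ : F) (hζ : orderOf ζ = n) :
    IsUnit (Matrix.of fun i j : Fin n => ζ ^ ((i : ℕ) * (j : ℕ))) ∧
    ∀ x : F, x ^ n = 1 →
      ∃ σ : Equiv.Perm (Fin n),
        (Matrix.of fun i j : Fin n => ζ ^ ((i : ℕ) * (j : ℕ))) *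
            Matrix.diagonal (fun i : Fin n => x ^ (i : ℕ)) *
            (Matrix.of fun i j : Fin n => ζ ^ ((i : ℕ) * (j : ℕ)))⁻¹ =
          σ.permMatrix F := by
  have hprim : IsPrimitiveRoot ζ n := hζ ▸ IsPrimitiveRoot.orderOf ζ
  have hdet := hprim.det_vandermonde_pow_ne_zero
  rw [of_pow_mul_eq_vandermonde]
  refine ⟨(isUnit_iff_isUnit_det _).2 hdet.isUnit, fun x hx => ?_⟩
  have : NeZero n := ⟨hn.ne'⟩
  obtain ⟨k, hk, rfl⟩ := hprim.eq_pow_of_pow_eq_one hx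
  refine ⟨Equiv.addRight ⟨k, hk⟩, ?_⟩
  rw [vandermonde_pow_mul_diagonal_pow hprim.pow_eq_one ⟨k, hk⟩]
  exact mul_nonsing_inv_cancel_right _ _ hdet.isUnit
end

section
/- Let F be a field and M a finite monoid, regarded as a category with a single object. If every indecomposable finite-dimensional representation of this category in Vect_F that is a direct summand of free(N) for some representation N in sets is an indicator representation (i.e., is either zero or is the one-dimensional representation on which every element of M acts as the identity), then M is the trivial monoid {1}. Equivalently, if M has an element different from the identity, then some indecomposable direct summand of the linearization free(M), where M acts on the set M by left multiplication, is not an indicator representation. -/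
/-!
Every finite-dimensional representation is a finite direct sum of indecomposables, and a
direct summand of a summand of `free(N)` is again one. So by induction on the dimension, if all
indecomposable such summands are indicator representations, then `M` acts trivially on every
finite-dimensional summand of some `free(N)`, in particular on `free(M)` itself. But on
`free(M)` the element `m` sends the basis vector `1` to the basis vector `m`.
-/

open CategoryTheory CategoryTheory.Limits
open scoped ZeroObject

universe u v

namespace CategoryTheory.SingleObj

variable {M : Type*} [Monoid M]

section ActsTrivially

variable {C : Type*} [Category C]

def ActsTrivially (R : SingleObj M ⥤ C) : Prop :=
  ∀ m : M, R.map (toEnd M m) = 𝟙 _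

theorem actsTrivially_const (X : C) : ActsTrivially ((Functor.const (SingleObj M)).obj X) :=
  fun _ => rfl

theorem actsTrivially_of_isZero [HasZeroObject C] {R : SingleObj M ⥤ C} (hR : IsZero R) :
    ActsTrivially R :=
  fun _ => (hR.obj _).eq_of_src _ _

theorem ActsTrivially.of_iso {R S : SingleObj M ⥤ C} (e : R ≅ S) (hS : ActsTrivially S) :
    ActsTrivially R := fun m => by
  rw [← NatIso.naturality_2 e (toEnd M m), hS m, Category.id_comp, Iso.hom_inv_id_app]

theorem ActsTrivially.biprod [Preadditive C] {Y Z : SingleObj M ⥤ C} [HasBinaryBiproduct Y Z]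
    (hY : ActsTrivially Y) (hZ : ActsTrivially Z) : ActsTrivially (Y ⊞ Z) := fun m => by
  have total : (biprod.fst : Y ⊞ Z ⟶ Y).app (star M) ≫ (biprod.inl : Y ⟶ Y ⊞ Z).app _ +
      (biprod.snd : Y ⊞ Z ⟶ Z).app _ ≫ (biprod.inr : Z ⟶ Y ⊞ Z).app _ = 𝟙 _ := by
    rw [← NatTrans.comp_app, ← NatTrans.comp_app, ← NatTrans.app_add, biprod.total,
      NatTrans.id_app]
  rw [← Category.comp_id ((Y ⊞ Z).map _), ← total, Preadditive.comp_add, ← Category.assoc,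
    ← Category.assoc, NatTrans.naturality, NatTrans.naturality, hY m, hZ m,
    Category.comp_id, Category.comp_id]

end ActsTrivially

end CategoryTheory.SingleObj

section FunctorToModuleCat

variable {J : Type*} [Category J] {F : Type u} [Field F]

theorem finiteDimensional_obj_biprod_left {Y Z : J ⥤ ModuleCat.{v} F} {j : J}
    [FiniteDimensional F ((Y ⊞ Z).obj j)] : FiniteDimensional F (Y.obj j) :=
  Module.Finite.of_surjective ((biprod.fst : Y ⊞ Z ⟶ Y).app j).hom fun y =>
    ⟨((biprod.inl : Y ⟶ Y ⊞ Z).app j) y, by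
      rw [← ModuleCat.comp_apply, ← NatTrans.comp_app, biprod.inl_fst, NatTrans.id_app]; rfl⟩

theorem finiteDimensional_obj_biprod_right {Y Z : J ⥤ ModuleCat.{v} F} {j : J}
    [FiniteDimensional F ((Y ⊞ Z).obj j)] : FiniteDimensional F (Z.obj j) :=
  Module.Finite.of_surjective ((biprod.snd : Y ⊞ Z ⟶ Z).app j).hom fun z =>
    ⟨((biprod.inr : Z ⟶ Y ⊞ Z).app j) z, by
      rw [← ModuleCat.comp_apply, ← NatTrans.comp_app, biprod.inr_snd, NatTrans.id_app]; rfl⟩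

theorem finrank_obj_biprod (Y Z : J ⥤ ModuleCat.{v} F) (j : J)
    [FiniteDimensional F (Y.obj j)] [FiniteDimensional F (Z.obj j)] :
    Module.finrank F ((Y ⊞ Z).obj j) = Module.finrank F (Y.obj j) + Module.finrank F (Z.obj j) := by
  have := preservesBinaryBiproducts_of_preservesBiproducts ((evaluation J (ModuleCat.{v} F)).obj j)
  let e : (Y ⊞ Z).obj j ≅ ModuleCat.of F (Y.obj j × Z.obj j) :=
    Functor.mapBiprod ((evaluation J _).obj j) Y Z ≪≫ ModuleCat.biprodIsoProd _ _
  rw [e.toLinearEquiv.finrank_eq]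
  exact Module.finrank_prod

def IsSummandOfFree (R : J ⥤ ModuleCat.{u} F) : Prop :=
  ∃ (N : J ⥤ Type u) (R' : J ⥤ ModuleCat.{u} F), Nonempty (R ⊞ R' ≅ N ⋙ ModuleCat.free F)

theorem isSummandOfFree_free (N : J ⥤ Type u) : IsSummandOfFree (N ⋙ ModuleCat.free F) :=
  ⟨N, 0, ⟨(isoBiprodZero (isZero_zero _)).symm⟩⟩

theorem IsSummandOfFree.biprod_left {R Y Z : J ⥤ ModuleCat.{u} F} (hR : IsSummandOfFree R)
    (e : R ≅ Y ⊞ Z) : IsSummandOfFree Y := by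
  obtain ⟨N, R', ⟨w⟩⟩ := hR
  exact ⟨N, Z ⊞ R', ⟨(biprod.associator Y Z R').symm ≪≫ biprod.mapIso e.symm (Iso.refl R') ≪≫ w⟩⟩

theorem IsSummandOfFree.biprod_right {R Y Z : J ⥤ ModuleCat.{u} F} (hR : IsSummandOfFree R)
    (e : R ≅ Y ⊞ Z) : IsSummandOfFree Z :=
  hR.biprod_left (e ≪≫ biprod.braiding Y Z)

end FunctorToModuleCat

namespace CategoryTheory.SingleObj

variable {M : Type*} [Monoid M] {F : Type u} [Field F]

theorem finrank_obj_pos {R : SingleObj M ⥤ ModuleCat.{v} F}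
    [FiniteDimensional F (R.obj (star M))] (hR : ¬IsZero R) :
    0 < Module.finrank F (R.obj (star M)) :=
  Module.finrank_pos_iff.2 <| not_subsingleton_iff_nontrivial.1 fun hsub =>
    hR <| Functor.isZero _ fun _ => ModuleCat.isZero_iff_subsingleton.2 hsub

theorem induction_on_indecomposable {P : (SingleObj M ⥤ ModuleCat.{v} F) → Prop}
    (zero : ∀ R, IsZero R → P R)
    (indecomposable : ∀ R, FiniteDimensional F (R.obj (star M)) → Indecomposable R → P R)
    (biprod : ∀ {R Y Z}, (R ≅ Y ⊞ Z) → P Y → P Z → P R)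
    (R : SingleObj M ⥤ ModuleCat.{v} F) [FiniteDimensional F (R.obj (star M))] : P R := by
  induction hn : Module.finrank F (R.obj (star M)) using Nat.strong_induction_on generalizing R
    with | _ n ih =>
  by_cases hzero : IsZero R
  · exact zero R hzero
  by_cases hind : Indecomposable R
  · exact indecomposable R ‹_› hind
  obtain ⟨Y, hY, Z, ⟨e⟩, hZ⟩ : ∃ Y, ¬IsZero Y ∧ ∃ Z, Nonempty (R ≅ Y ⊞ Z) ∧ ¬IsZero Z := by
    simpa [Indecomposable, hzero] using hind
  have := (e.app (star M)).toLinearEquiv.finiteDimensional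
  have := finiteDimensional_obj_biprod_left (Y := Y) (Z := Z) (j := star M)
  have := finiteDimensional_obj_biprod_right (Y := Y) (Z := Z) (j := star M)
  have hsum : n = Module.finrank F (Y.obj (star M)) + Module.finrank F (Z.obj (star M)) := by
    rw [← hn, (e.app (star M)).toLinearEquiv.finrank_eq, finrank_obj_biprod]
  have hYpos := finrank_obj_pos hY
  have hZpos := finrank_obj_pos hZ
  exact biprod e (ih _ (by omega) Y rfl) (ih _ (by omega) Z rfl)

theorem actsTrivially_of_isSummandOfFree
    (h : ∀ R : SingleObj M ⥤ ModuleCat.{u} F, FiniteDimensional F (R.obj (star M)) →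
      Indecomposable R → IsSummandOfFree R → ActsTrivially R)
    (R : SingleObj M ⥤ ModuleCat.{u} F) [FiniteDimensional F (R.obj (star M))]
    (hR : IsSummandOfFree R) : ActsTrivially R := by
  refine induction_on_indecomposable (P := fun R => IsSummandOfFree R → ActsTrivially R)
    (fun _ hzero _ => actsTrivially_of_isZero hzero) h (fun e hY hZ hR => ?_) R hR
  exact ((hY (hR.biprod_left e)).biprod (hZ (hR.biprod_right e))).of_iso e

theorem eq_one_of_actsTrivially_free_actionAsFunctor {M : Type u} [Monoid M] {F : Type u}
    [Ring F] [Nontrivial F] (h : ActsTrivially (actionAsFunctor M M ⋙ ModuleCat.free F)) (m : M) :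
    m = 1 := by
  have hm := ModuleCat.free_map_apply (R := F) ((actionAsFunctor M M).map (toEnd M m)) (1 : M)
  rw [← Functor.comp_map, h m] at hm
  have hm1 : m * 1 = 1 := Finsupp.single_left_injective one_ne_zero hm.symm
  rwa [mul_one] at hm1

end CategoryTheory.SingleObj

/-- Let `M` be a finite monoid, regarded as a one-object category. If every
indecomposable finite-dimensional representation of this category over a field `F` that is a
direct summand of `free(N)` for some representation `N` in sets is an indicator representation
(zero, or the one-dimensional representation on which `M` acts by the identity, i.e. the
constant representation with value `F`), then `M` is trivial. -/
theorem stmt15 (M : Type) [Monoid M] [Fintype M] (F : Type) [Field F]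
    (h : ∀ R : SingleObj M ⥤ ModuleCat.{0} F,
      (∀ x, FiniteDimensional F (R.obj x)) →
      CategoryTheory.Indecomposable R →
      (∃ (N : SingleObj M ⥤ Type 0) (R' : SingleObj M ⥤ ModuleCat.{0} F),
        Nonempty (R ⊞ R' ≅ N ⋙ ModuleCat.free F)) →
      (IsZero R ∨
        Nonempty (R ≅ (Functor.const (SingleObj M)).obj (ModuleCat.of F F)))) :
    ∀ m : M, m = 1 := by
  have : FiniteDimensional F ((actionAsFunctor M M ⋙ ModuleCat.free F).obj (SingleObj.star M)) :=
    inferInstanceAs (FiniteDimensional F (M →₀ F))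
  refine SingleObj.eq_one_of_actsTrivially_free_actionAsFunctor (F := F) <|
    SingleObj.actsTrivially_of_isSummandOfFree (fun R hfd hind hR => ?_) _
      (isSummandOfFree_free _)
  rcases h R (fun _ => hfd) hind hR with hzero | ⟨⟨e⟩⟩
  · exact SingleObj.actsTrivially_of_isZero hzero
  · exact (SingleObj.actsTrivially_const _).of_iso e
end
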